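/- (Limit points of the DC algorithm are global minimizers.) Let F₁ : ℝⁿ → ℝ ∪ {+∞} be proper, lower semicontinuous and convex, let F₂ : ℝ^q → ℝ ∪ {+∞} be proper, lower semicontinuous and convex, let Φ : ℝ^q → ℝ be a differentiable convex function with Lipschitz continuous gradient, let Ξ : ℝⁿ → ℝ^q be linear, and assume F₂ □ Φ is exact. Define J(x) := F₁(x) − (F₂ □ Φ)(Ξx), assume J is proper, lower semicontinuous and convex, and assume argmin_{x ∈ ℝⁿ} J(x) is nonempty and bounded. Let sequences (x_k), (z_k), (u_k) satisfy for every k: z_k ∈ argmin_{z ∈ ℝ^q} ( F₂(z) + Φ(Ξx_k − z) ), u_k = Ξᵀ∇Φ(Ξx_k − z_k), and x_{k+1} ∈ argmin_{x ∈ ℝⁿ} ( F₁(x) − ⟨u_k, x⟩ ). Then every limit point x̄ of the sequence (x_k)_{k∈ℕ} is a global minimizer of J, i.e. J(x̄) = min_{x ∈ ℝⁿ} J(x). -/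

import Mathlib

open scoped RealInnerProductSpace

/-- Infimal convolution of two extended-real-valued functions. -/
noncomputable def infConv {E : Type*} [SubtractionMonoid E] (f g : E → EReal) (x : E) : EReal :=
  ⨅ z : E, f z + g (x - z)

/-- Convexity for extended-real-valued functions. -/
def ERealConvexOn {E : Type*} [AddCommMonoid E] [SMul ℝ E] (f : E → EReal) : Prop :=
  ∀ x y : E, ∀ a b : ℝ, 0 ≤ a → 0 ≤ b → a + b = 1 →
    f (a • x + b • y) ≤ (a : EReal) * f x + (b : EReal) * f y

/-- A function into ℝ ∪ {+∞} is proper: it never takes the value −∞ and is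
finite somewhere. -/
def ERealProper {E : Type*} (f : E → EReal) : Prop :=
  (∀ x, f x ≠ ⊥) ∧ ∃ x, f x ≠ ⊤

section Aux
variable {E : Type*} [NormedAddCommGroup E] [InnerProductSpace ℝ E] [CompleteSpace E]

lemma deriv_le_of_slope_le {ψ : ℝ → ℝ} {m A : ℝ} (hψ : HasDerivAt ψ m 0)
    (h : ∀ t ∈ Set.Ioo (0:ℝ) 1, ψ t ≤ ψ 0 + t * A) : m ≤ A := by
  have hslope : Filter.Tendsto (slope ψ 0) (nhdsWithin 0 (Set.Ioi 0)) (nhds m) :=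
    (hasDerivAt_iff_tendsto_slope.1 hψ).mono_left
      (nhdsWithin_mono _ (fun t ht => by simpa using ne_of_gt ht))
  refine le_of_tendsto hslope ?_
  filter_upwards [Ioo_mem_nhdsGT_of_mem (by norm_num : (0:ℝ) ∈ Set.Ico 0 1)] with t ht
  have ht0 : (0:ℝ) < t := ht.1
  have h2 := h t ht
  rw [slope_def_field, sub_zero, div_le_iff₀ ht0]
  linarith

lemma le_deriv_of_le_slope {ψ : ℝ → ℝ} {m B : ℝ} (hψ : HasDerivAt ψ m 0)
    (h : ∀ t ∈ Set.Ioo (0:ℝ) 1, ψ 0 + t * B ≤ ψ t) : B ≤ m := by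
  have := deriv_le_of_slope_le (A := -B) hψ.neg (fun t ht => by
    have h2 := h t ht; show -ψ t ≤ -ψ 0 + t * (-B); linarith)
  linarith

/-- Derivative of `Φ` along a line, in terms of the gradient. -/
lemma hasDerivAt_comp_line {Φ : E → ℝ} (hΦ : Differentiable ℝ Φ) (b d : E) :
    HasDerivAt (fun t : ℝ => Φ (b + t • d)) ⟪gradient Φ b, d⟫ 0 := by
  have hline : HasDerivAt (fun t : ℝ => b + t • d) d 0 := by
    simpa using ((hasDerivAt_id (0:ℝ)).smul_const d).const_add b
  have hgrad := (hΦ b).hasGradientAt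
  have hfd : HasFDerivAt Φ (InnerProductSpace.toDual ℝ E (gradient Φ b)) b :=
    hgrad.hasFDerivAt
  have hfd' : HasFDerivAt Φ (InnerProductSpace.toDual ℝ E (gradient Φ b))
      ((fun t : ℝ => b + t • d) 0) := by simpa using hfd
  have := hfd'.comp_hasDerivAt (0:ℝ) hline
  simp only [InnerProductSpace.toDual_apply_apply] at this
  exact this

/-- Gradient inequality for a convex differentiable function. -/
lemma convex_gradient_ineq {Φ : E → ℝ} (hΦ : Differentiable ℝ Φ)
    (hconv : ConvexOn ℝ Set.univ Φ) (x y : E) :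
    ⟪gradient Φ x, y - x⟫ ≤ Φ y - Φ x := by
  refine deriv_le_of_slope_le (hasDerivAt_comp_line hΦ x (y - x)) ?_
  intro t ht
  have hcv := hconv.2 (Set.mem_univ x) (Set.mem_univ y) (by linarith [ht.2] : (0:ℝ) ≤ 1 - t)
    (le_of_lt ht.1) (by ring)
  have hx : (1 - t) • x + t • y = x + t • (y - x) := by
    module
  rw [hx] at hcv
  simp only [smul_eq_mul] at hcv
  simp only [zero_smul, add_zero]
  nlinarith

end Aux

section Descent
variable {E : Type*} [NormedAddCommGroup E] [InnerProductSpace ℝ E] [CompleteSpace E]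

/-- Descent-type lemma: quadratic upper bound from a Lipschitz gradient
(with constant `K` instead of the optimal `K/2`). -/
lemma descent_lemma {Φ : E → ℝ} (hΦ : Differentiable ℝ Φ) {K : NNReal}
    (hlip : LipschitzWith K (fun z => gradient Φ z)) (x y : E) :
    Φ y ≤ Φ x + ⟪gradient Φ x, y - x⟫ + (K : ℝ) * ‖y - x‖ ^ 2 := by
  set v := gradient Φ x with hv
  set g : E → ℝ := fun w => Φ w - ⟪v, w⟫ with hg
  have hgd : ∀ w, HasFDerivAt g
      ((InnerProductSpace.toDual ℝ E) (gradient Φ w - v)) w := by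
    intro w
    have h1 : HasFDerivAt Φ ((InnerProductSpace.toDual ℝ E) (gradient Φ w)) w :=
      (hΦ w).hasGradientAt.hasFDerivAt
    have h2 : HasFDerivAt (fun w' => (⟪v, w'⟫ : ℝ))
        ((InnerProductSpace.toDual ℝ E) v) w :=
      ((InnerProductSpace.toDual ℝ E) v).hasFDerivAt
    have := h1.sub h2
    rw [map_sub]; exact this
  have hbound : ∀ w ∈ Metric.closedBall x ‖y - x‖,
      ‖fderiv ℝ g w‖ ≤ (K : ℝ) * ‖y - x‖ := by
    intro w hw
    rw [(hgd w).fderiv]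
    rw [(InnerProductSpace.toDual ℝ E).norm_map]
    calc ‖gradient Φ w - v‖ ≤ (K : ℝ) * ‖w - x‖ := by
          simpa [dist_eq_norm] using hlip.dist_le_mul w x
      _ ≤ (K : ℝ) * ‖y - x‖ := by
          have := Metric.mem_closedBall.1 hw
          rw [dist_eq_norm] at this
          exact mul_le_mul_of_nonneg_left this K.2
  have hmv := Convex.norm_image_sub_le_of_norm_fderiv_le
    (fun w _ => (hgd w).differentiableAt) hbound (convex_closedBall x ‖y - x‖)
    (Metric.mem_closedBall_self (norm_nonneg _))
    (show y ∈ Metric.closedBall x ‖y - x‖ by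
      simp [Metric.mem_closedBall, dist_eq_norm])
  have h3 : g y - g x ≤ (K : ℝ) * ‖y - x‖ * ‖y - x‖ :=
    le_trans (le_abs_self _) hmv
  have h4 : (⟪v, y - x⟫ : ℝ) = ⟪v, y⟫ - ⟪v, x⟫ := inner_sub_right v y x
  simp only [hg] at h3
  nlinarith [sq_abs ‖y - x‖, sq_nonneg ‖y-x‖]

end Descent

open Filter in
set_option maxHeartbeats 2000000 in
theorem dc_algorithm_limit_points_minimize' {n q : ℕ}
    (F₁ : EuclideanSpace ℝ (Fin n) → EReal)
    (F₂ : EuclideanSpace ℝ (Fin q) → EReal)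
    (Φ : EuclideanSpace ℝ (Fin q) → ℝ)
    (Ξ : EuclideanSpace ℝ (Fin n) →ₗ[ℝ] EuclideanSpace ℝ (Fin q))
    (hF₁proper : ERealProper F₁)
    (hF₂proper : ERealProper F₂)
    (hF₂conv : ERealConvexOn F₂)
    (hΦdiff : Differentiable ℝ Φ) (hΦconv : ConvexOn ℝ Set.univ Φ)
    (hΦlip : ∃ K : NNReal, LipschitzWith K (fun z => gradient Φ z))
    (hexact : ∀ s, ∃ zs,
      F₂ zs + (Φ (s - zs) : EReal) = infConv F₂ (fun z => (Φ z : EReal)) s ∧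
      ∃ r : ℝ, infConv F₂ (fun z => (Φ z : EReal)) s = (r : EReal))
    (hJlsc : LowerSemicontinuous
      (fun x => F₁ x - infConv F₂ (fun z => (Φ z : EReal)) (Ξ x)))
    (hJconv : ERealConvexOn
      (fun x => F₁ x - infConv F₂ (fun z => (Φ z : EReal)) (Ξ x)))
    (xseq : ℕ → EuclideanSpace ℝ (Fin n))
    (zseq : ℕ → EuclideanSpace ℝ (Fin q))
    (useq : ℕ → EuclideanSpace ℝ (Fin n))
    (hz : ∀ k, ∀ w, F₂ (zseq k) + (Φ (Ξ (xseq k) - zseq k) : EReal)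
        ≤ F₂ w + (Φ (Ξ (xseq k) - w) : EReal))
    (hu : ∀ k, useq k = LinearMap.adjoint Ξ (gradient Φ (Ξ (xseq k) - zseq k)))
    (hx : ∀ k, ∀ w, F₁ (xseq (k + 1)) - ((⟪useq k, xseq (k + 1)⟫ : ℝ) : EReal)
        ≤ F₁ w - ((⟪useq k, w⟫ : ℝ) : EReal)) :
    ∀ xbar : EuclideanSpace ℝ (Fin n),
      (∃ φ : ℕ → ℕ, StrictMono φ ∧
        Filter.Tendsto (fun k => xseq (φ k)) Filter.atTop (nhds xbar)) →
      F₁ xbar - infConv F₂ (fun z => (Φ z : EReal)) (Ξ xbar)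
        = ⨅ w, (F₁ w - infConv F₂ (fun z => (Φ z : EReal)) (Ξ w)) := by
  obtain ⟨K, hK⟩ := hΦlip
  set Gf : EuclideanSpace ℝ (Fin q) → EReal :=
    infConv F₂ (fun z => (Φ z : EReal)) with hGf
  set J : EuclideanSpace ℝ (Fin n) → EReal := fun x => F₁ x - Gf (Ξ x) with hJ
  -- Gf is real-valued
  have hGreal : ∀ s, Gf s = ((Gf s).toReal : EReal) := by
    intro s
    obtain ⟨zs, -, r, hr⟩ := hexact s
    rw [show Gf s = (r : EReal) from hr]
    simp
  set g : EuclideanSpace ℝ (Fin q) → ℝ := fun s => (Gf s).toReal with hg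
  -- notation
  set v : ℕ → EuclideanSpace ℝ (Fin q) :=
    fun k => gradient Φ (Ξ (xseq k) - zseq k) with hv
  have hinfle : ∀ s z', Gf s ≤ F₂ z' + ((Φ (s - z') : ℝ) : EReal) := by
    intro s z'
    rw [hGf, infConv]
    exact iInf_le _ z'
  -- (A) : the infimum at Ξ x_k is attained at z_k
  have hA : ∀ k, F₂ (zseq k) + ((Φ (Ξ (xseq k) - zseq k) : ℝ) : EReal)
      = ((g (Ξ (xseq k))) : EReal) := by
    intro k
    rw [hg]; rw [← hGreal (Ξ (xseq k))]
    refine le_antisymm ?_ (hinfle _ _)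
    obtain ⟨zs, heq, -⟩ := hexact (Ξ (xseq k))
    rw [← heq]
    exact hz k zs
  -- F₂ (z_k) is finite
  have hc : ∀ k, F₂ (zseq k) = (((F₂ (zseq k)).toReal : ℝ) : EReal) := by
    intro k
    refine (EReal.coe_toReal ?_ (hF₂proper.1 _)).symm
    intro htop
    have := hA k
    rw [htop] at this
    simp at this
  set c : ℕ → ℝ := fun k => (F₂ (zseq k)).toReal with hcdef
  have hAc : ∀ k, c k + Φ (Ξ (xseq k) - zseq k) = g (Ξ (xseq k)) := by
    intro k
    have := hA k
    rw [hc k] at this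
    exact_mod_cast this
  -- (B): v k is a subgradient of F₂ at z_k
  have hB : ∀ k z, ((c k : ℝ) : EReal) + ((⟪v k, z - zseq k⟫ : ℝ) : EReal) ≤ F₂ z := by
    intro k z
    rcases eq_or_ne (F₂ z) ⊤ with htop | hne
    · rw [htop]; exact le_top
    have hzr : F₂ z = (((F₂ z).toReal : ℝ) : EReal) :=
      (EReal.coe_toReal hne (hF₂proper.1 z)).symm
    set rz : ℝ := (F₂ z).toReal with hrz
    set b : EuclideanSpace ℝ (Fin q) := Ξ (xseq k) - zseq k with hb
    set d : EuclideanSpace ℝ (Fin q) := z - zseq k with hd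
    -- real inequality ⟪v k, d⟫ ≤ rz - c k
    have key : ⟪v k, d⟫ ≤ rz - c k := by
      have hder : HasDerivAt (fun t : ℝ => Φ (b + t • (-d))) ⟪gradient Φ b, -d⟫ 0 :=
        hasDerivAt_comp_line hΦdiff b (-d)
      have hslope : ∀ t ∈ Set.Ioo (0:ℝ) 1,
          (fun t : ℝ => Φ (b + t • (-d))) 0 + t * (-(rz - c k))
            ≤ (fun t : ℝ => Φ (b + t • (-d))) t := by
        intro t ht
        have hpt : (1 - t) • zseq k + t • z = zseq k + t • d := by rw [hd]; module
        have hcv := hF₂conv (zseq k) z (1 - t) t (by linarith [ht.2]) (le_of_lt ht.1)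
          (by ring)
        rw [hpt] at hcv
        have hzineq := hz k (zseq k + t • d)
        have hpt2 : Ξ (xseq k) - (zseq k + t • d) = b + t • (-d) := by rw [hb]; module
        rw [hpt2] at hzineq
        have hcomb : ((c k : ℝ) : EReal) + ((Φ b : ℝ) : EReal)
            ≤ (((1 - t) * c k + t * rz : ℝ) : EReal) + ((Φ (b + t • (-d)) : ℝ) : EReal) := by
          calc ((c k : ℝ) : EReal) + ((Φ b : ℝ) : EReal)
              = F₂ (zseq k) + ((Φ (Ξ (xseq k) - zseq k) : ℝ) : EReal) := by rw [← hc k, ← hb]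
            _ ≤ F₂ (zseq k + t • d) + ((Φ (b + t • (-d)) : ℝ) : EReal) := hzineq
            _ ≤ (((1 - t) : ℝ) : EReal) * F₂ (zseq k) + ((t : ℝ) : EReal) * F₂ z
                + ((Φ (b + t • (-d)) : ℝ) : EReal) := by
                exact add_le_add_left hcv _
            _ = (((1 - t) * c k + t * rz : ℝ) : EReal) + ((Φ (b + t • (-d)) : ℝ) : EReal) := by
                rw [hc k, hzr]
                norm_cast
        have hreal : c k + Φ b ≤ (1 - t) * c k + t * rz + Φ (b + t • (-d)) := by
          exact_mod_cast hcomb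
        have h0 : (fun t : ℝ => Φ (b + t • (-d))) 0 = Φ b := by norm_num
        simp only [h0]
        nlinarith
      have := le_deriv_of_le_slope hder hslope
      have hinner : (⟪gradient Φ b, -d⟫ : ℝ) = -⟪v k, d⟫ := by
        rw [inner_neg_right, hb, hv]
      rw [hinner] at this
      linarith
    rw [hzr]
    have : c k + ⟪v k, z - zseq k⟫ ≤ rz := by rw [← hd] at *; linarith
    exact_mod_cast this
  -- (C): v k is a subgradient of g at Ξ x_k
  have hC : ∀ k s', g (Ξ (xseq k)) + ⟪v k, s' - Ξ (xseq k)⟫ ≤ g s' := by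
    intro k s'
    have : ((g (Ξ (xseq k)) + ⟪v k, s' - Ξ (xseq k)⟫ : ℝ) : EReal) ≤ Gf s' := by
      rw [hGf, infConv]
      refine le_iInf fun z => ?_
      rcases eq_or_ne (F₂ z) ⊤ with htop | hne
      · rw [htop]; simp
      have hzr : F₂ z = (((F₂ z).toReal : ℝ) : EReal) :=
        (EReal.coe_toReal hne (hF₂proper.1 z)).symm
      set rz : ℝ := (F₂ z).toReal
      have hBr : c k + ⟪v k, z - zseq k⟫ ≤ rz := by
        have := hB k z
        rw [hzr] at this
        exact_mod_cast this
      have hgr : (⟪v k, (s' - z) - (Ξ (xseq k) - zseq k)⟫ : ℝ)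
          ≤ Φ (s' - z) - Φ (Ξ (xseq k) - zseq k) :=
        convex_gradient_ineq hΦdiff hΦconv _ _
      have hsum : (⟪v k, z - zseq k⟫ : ℝ) + ⟪v k, (s' - z) - (Ξ (xseq k) - zseq k)⟫
          = ⟪v k, s' - Ξ (xseq k)⟫ := by
        rw [← inner_add_right]
        congr 1
        abel
      have hreal : g (Ξ (xseq k)) + ⟪v k, s' - Ξ (xseq k)⟫ ≤ rz + Φ (s' - z) := by
        have := hAc k
        linarith
      rw [hzr]
      exact_mod_cast hreal
    rw [hGreal s'] at this
    exact_mod_cast this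
  -- (D): quadratic upper bound for g around Ξ x_k
  have hD : ∀ k s', g s' ≤ g (Ξ (xseq k)) + ⟪v k, s' - Ξ (xseq k)⟫
      + (K : ℝ) * ‖s' - Ξ (xseq k)‖ ^ 2 := by
    intro k s'
    have h1 : Gf s' ≤ F₂ (zseq k) + ((Φ (s' - zseq k) : ℝ) : EReal) := hinfle s' (zseq k)
    rw [hGreal s', hc k] at h1
    have h1r : g s' ≤ c k + Φ (s' - zseq k) := by exact_mod_cast h1
    have h2 : Φ (s' - zseq k) ≤ Φ (Ξ (xseq k) - zseq k)
        + ⟪v k, (s' - zseq k) - (Ξ (xseq k) - zseq k)⟫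
        + (K : ℝ) * ‖(s' - zseq k) - (Ξ (xseq k) - zseq k)‖ ^ 2 :=
      descent_lemma hΦdiff hK _ _
    have h3 : (s' - zseq k) - (Ξ (xseq k) - zseq k) = s' - Ξ (xseq k) := by abel
    rw [h3] at h2
    have := hAc k
    linarith
  -- adjoint identity
  have hadj : ∀ k y, (⟪useq k, y⟫ : ℝ) = ⟪v k, Ξ y⟫ := by
    intro k y
    rw [hu k]
    exact LinearMap.adjoint_inner_left Ξ y (v k)
  -- F₁ is finite along the iterates
  have ha : ∀ k, F₁ (xseq (k + 1)) = (((F₁ (xseq (k + 1))).toReal : ℝ) : EReal) := by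
    intro k
    refine (EReal.coe_toReal ?_ (hF₁proper.1 _)).symm
    intro htop
    obtain ⟨w₀, hw₀⟩ := hF₁proper.2
    have hw₀r : F₁ w₀ = (((F₁ w₀).toReal : ℝ) : EReal) :=
      (EReal.coe_toReal hw₀ (hF₁proper.1 _)).symm
    have := hx k w₀
    rw [htop, hw₀r, EReal.top_sub_coe] at this
    rw [show ((((F₁ w₀).toReal : ℝ)) : EReal) - ((⟪useq k, w₀⟫ : ℝ) : EReal)
      = (((F₁ w₀).toReal - ⟪useq k, w₀⟫ : ℝ) : EReal) by norm_cast] at this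
    exact (EReal.coe_lt_top _).not_ge this
  set a : ℕ → ℝ := fun k => (F₁ (xseq k)).toReal with hadef
  -- J is real-valued along the iterates
  have hJreal : ∀ k, J (xseq (k + 1))
      = ((a (k + 1) - g (Ξ (xseq (k + 1))) : ℝ) : EReal) := by
    intro k
    rw [hJ]
    dsimp only
    rw [ha k, hGreal (Ξ (xseq (k + 1)))]
    norm_cast
  -- (F): the master inequality
  have hF : ∀ k w', J (xseq (k + 1)) ≤ J w'
      + (((K : ℝ) * ‖Ξ w' - Ξ (xseq k)‖ ^ 2 : ℝ) : EReal) := by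
    intro k w'
    rcases eq_or_ne (F₁ w') ⊤ with htop | hne
    · have : J w' = ⊤ := by
        rw [hJ]; dsimp only; rw [htop, hGreal (Ξ w'), EReal.top_sub_coe]
      rw [this, EReal.top_add_coe]
      exact le_top
    have hfw : F₁ w' = (((F₁ w').toReal : ℝ) : EReal) :=
      (EReal.coe_toReal hne (hF₁proper.1 _)).symm
    set fw : ℝ := (F₁ w').toReal
    have hJw' : J w' = ((fw - g (Ξ w') : ℝ) : EReal) := by
      rw [hJ]; dsimp only; rw [hfw, hGreal (Ξ w')]; norm_cast
    -- real version of hx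
    have h1 : a (k + 1) - ⟪useq k, xseq (k + 1)⟫ ≤ fw - ⟪useq k, w'⟫ := by
      have := hx k w'
      rw [ha k, hfw] at this
      exact_mod_cast this
    have h2 := hC k (Ξ (xseq (k + 1)))
    have h3 := hD k (Ξ w')
    have e1 : (⟪v k, Ξ (xseq (k + 1)) - Ξ (xseq k)⟫ : ℝ)
        = ⟪useq k, xseq (k + 1)⟫ - ⟪useq k, xseq k⟫ := by
      rw [inner_sub_right, hadj k, hadj k]
    have e2 : (⟪v k, Ξ w' - Ξ (xseq k)⟫ : ℝ)
        = ⟪useq k, w'⟫ - ⟪useq k, xseq k⟫ := by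
      rw [inner_sub_right, hadj k, hadj k]
    rw [hJreal k, hJw']
    rw [show ((fw - g (Ξ w') : ℝ) : EReal) + (((K : ℝ) * ‖Ξ w' - Ξ (xseq k)‖ ^ 2 : ℝ) : EReal)
      = ((fw - g (Ξ w') + (K : ℝ) * ‖Ξ w' - Ξ (xseq k)‖ ^ 2 : ℝ) : EReal) by norm_cast]
    rw [EReal.coe_le_coe_iff]
    rw [e1] at h2
    rw [e2] at h3
    linarith
  -- monotonicity
  have hmono : ∀ k, J (xseq (k + 1)) ≤ J (xseq k) := by
    intro k
    have h := hF k (xseq k)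
    have h0 : ((K : ℝ) * ‖Ξ (xseq k) - Ξ (xseq k)‖ ^ 2 : ℝ) = 0 := by rw [sub_self, norm_zero]; ring
    rw [h0, EReal.coe_zero, add_zero] at h
    exact h
  have hanti : ∀ k m, k ≤ m → J (xseq m) ≤ J (xseq k) := by
    intro k m hkm
    induction m with
    | zero => rw [Nat.le_zero.1 hkm]
    | succ m ih =>
      rcases Nat.lt_or_ge k (m + 1) with hlt | hge
      · exact le_trans (hmono m) (ih (Nat.lt_succ_iff.1 hlt))
      · have : k = m + 1 := le_antisymm hkm hge
        rw [this]
  -- J never takes the value ⊥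
  have hJbot : ∀ x, J x ≠ ⊥ := by
    intro x
    rw [hJ]; dsimp only; rw [hGreal (Ξ x)]
    rcases eq_or_ne (F₁ x) ⊤ with h | h
    · rw [h, EReal.top_sub_coe]; simp
    · rw [← EReal.coe_toReal h (hF₁proper.1 x),
        show ((((F₁ x).toReal : ℝ)) : EReal) - (((Gf (Ξ x)).toReal : ℝ) : EReal)
          = (((F₁ x).toReal - (Gf (Ξ x)).toReal : ℝ) : EReal) by norm_cast]
      exact EReal.coe_ne_bot _
  -- real values of J along the iterates
  set jj : ℕ → ℝ := fun k => a k - g (Ξ (xseq k)) with hjjdef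
  have hjr : ∀ k, 1 ≤ k → J (xseq k) = ((jj k : ℝ) : EReal) := by
    intro k hk
    obtain ⟨m, rfl⟩ := Nat.exists_eq_add_of_le hk
    rw [add_comm]
    exact hJreal m
  -- the main argument
  intro xbar ⟨φ, hφ, htend⟩
  have hmin : ∀ w, J xbar ≤ J w := by
    intro w
    rcases eq_or_ne (J w) ⊤ with htop | hne
    · rw [htop]; exact le_top
    have hJwr : J w = (((J w).toReal : ℝ) : EReal) :=
      (EReal.coe_toReal hne (hJbot w)).symm
    set Jw : ℝ := (J w).toReal with hJwdef
    by_contra hcon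
    have hlt : J w < J xbar := not_le.1 hcon
    obtain ⟨cc, hc1, hc2⟩ := EReal.exists_between_coe_real hlt
    have hev := htend.eventually (hJlsc xbar (cc : EReal) hc2)
    obtain ⟨i₀, hi₀⟩ := Filter.eventually_atTop.1 hev
    set i₁ : ℕ := i₀ + 1 with hi₁def
    have hφ1 : ∀ i : ℕ, 1 ≤ φ (i + i₁) := by
      intro i
      calc 1 ≤ i + i₁ := by omega
        _ ≤ φ (i + i₁) := hφ.le_apply
    set r : ℕ → ℝ := fun i => jj (φ (i + i₁)) with hrdef
    have hri : ∀ i, J (xseq (φ (i + i₁))) = ((r i : ℝ) : EReal) := fun i =>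
      hjr _ (hφ1 i)
    have hrc : ∀ i, cc < r i := by
      intro i
      have := hi₀ (i + i₁) (by omega)
      beta_reduce at this
      rw [hri i] at this
      exact_mod_cast this
    have hrant : Antitone r := by
      intro i j hij
      have h := hanti (φ (i + i₁)) (φ (j + i₁))
        (hφ.monotone (by omega))
      rw [hri i, hri j] at h
      exact_mod_cast h
    have hbdd : BddBelow (Set.range r) := ⟨cc, by
      rintro x ⟨i, rfl⟩; exact (hrc i).le⟩
    set ℓ : ℝ := ⨅ i, r i with hldef
    have hlim : Filter.Tendsto r Filter.atTop (nhds ℓ) :=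
      tendsto_atTop_ciInf hrant hbdd
    have hcl : cc ≤ ℓ := le_ciInf fun i => (hrc i).le
    -- limit of the quadratic terms
    set Qi : ℕ → ℝ := fun i => (K : ℝ) * ‖Ξ w - Ξ (xseq (φ (i + i₁)))‖ ^ 2 with hQidef
    set Qinf : ℝ := (K : ℝ) * ‖Ξ w - Ξ xbar‖ ^ 2 with hQinfdef
    have hΞc : Continuous Ξ := Ξ.continuous_of_finiteDimensional
    have hxsub : Filter.Tendsto (fun i => xseq (φ (i + i₁))) Filter.atTop (nhds xbar) :=
      htend.comp (tendsto_add_atTop_nat i₁)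
    have hQlim : Filter.Tendsto Qi Filter.atTop (nhds Qinf) := by
      have h1 : Filter.Tendsto (fun i => Ξ w - Ξ (xseq (φ (i + i₁))))
          Filter.atTop (nhds (Ξ w - Ξ xbar)) :=
        Filter.Tendsto.sub tendsto_const_nhds ((hΞc.tendsto xbar).comp hxsub)
      exact ((h1.norm.pow 2).const_mul _)
    have hQinf0 : 0 ≤ Qinf := mul_nonneg K.2 (sq_nonneg _)
    -- key inequality for each t ∈ (0,1)
    have hkey : ∀ t : ℝ, 0 < t → t < 1 → ℓ ≤ Jw + t * Qinf := by
      intro t ht0 ht1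
      have step : ∀ i, r (i + 1) ≤ (1 - t) * r i + t * Jw + t ^ 2 * Qi i := by
        intro i
        set k := φ (i + i₁) with hkdef
        set w' := (1 - t) • xseq k + t • w with hw'def
        have hcv := hJconv (xseq k) w (1 - t) t (by linarith) (le_of_lt ht0) (by ring)
        have hFk := hF k w'
        have hvec : Ξ w' - Ξ (xseq k) = t • (Ξ w - Ξ (xseq k)) := by
          rw [hw'def, map_add, map_smul, map_smul]
          module
        have hnorm : (K : ℝ) * ‖Ξ w' - Ξ (xseq k)‖ ^ 2 = t ^ 2 * Qi i := by
          rw [hvec, norm_smul]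
          rw [Real.norm_eq_abs, abs_of_pos ht0]
          rw [hQidef]
          ring
        have hchain : J (xseq (φ (i + 1 + i₁)))
            ≤ ((( (1 - t) * r i + t * Jw + t ^ 2 * Qi i : ℝ)) : EReal) := by
          calc J (xseq (φ (i + 1 + i₁))) ≤ J (xseq (k + 1)) := by
                refine hanti _ _ ?_
                have : k < φ (i + 1 + i₁) := by
                  rw [show i + 1 + i₁ = (i + i₁) + 1 by omega]
                  exact hφ (Nat.lt_succ_self _)
                omega
            _ ≤ J w' + (((K : ℝ) * ‖Ξ w' - Ξ (xseq k)‖ ^ 2 : ℝ) : EReal) := hFk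
            _ ≤ (((1 - t : ℝ)) : EReal) * J (xseq k) + ((t : ℝ) : EReal) * J w
                + (((K : ℝ) * ‖Ξ w' - Ξ (xseq k)‖ ^ 2 : ℝ) : EReal) := by
                exact add_le_add_left hcv _
            _ = ((( (1 - t) * r i + t * Jw + t ^ 2 * Qi i : ℝ)) : EReal) := by
                rw [hri i, hJwr, hnorm]
                norm_cast
        have hji : J (xseq (φ (i + 1 + i₁))) = ((r (i + 1) : ℝ) : EReal) := hjr _ (hφ1 (i + 1))
        rw [hji] at hchain
        exact_mod_cast hchain
      have hlim1 : Filter.Tendsto (fun i => r (i + 1)) Filter.atTop (nhds ℓ) :=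
        hlim.comp (tendsto_add_atTop_nat 1)
      have hlim2 : Filter.Tendsto (fun i => (1 - t) * r i + t * Jw + t ^ 2 * Qi i)
          Filter.atTop (nhds ((1 - t) * ℓ + t * Jw + t ^ 2 * Qinf)) := by
        exact ((hlim.const_mul _).add tendsto_const_nhds).add (hQlim.const_mul _)
      have hfin := le_of_tendsto_of_tendsto' hlim1 hlim2 step
      nlinarith [hfin, ht0]
    -- conclude a contradiction
    have hJwc : Jw < cc := by
      rw [hJwr] at hc1
      exact_mod_cast hc1
    set t : ℝ := min (1 / 2) ((cc - Jw) / (2 * (Qinf + 1))) with htdef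
    have ht0 : 0 < t := by
      apply lt_min (by norm_num)
      apply div_pos (by linarith) (by linarith)
    have ht1 : t < 1 := lt_of_le_of_lt (min_le_left _ _) (by norm_num)
    have := hkey t ht0 ht1
    have h2 : t * Qinf ≤ ((cc - Jw) / (2 * (Qinf + 1))) * Qinf :=
      mul_le_mul_of_nonneg_right (min_le_right _ _) hQinf0
    have h3 : ((cc - Jw) / (2 * (Qinf + 1))) * Qinf < (cc - Jw) := by
      rw [div_mul_eq_mul_div, div_lt_iff₀ (by linarith)]
      nlinarith
    linarith
  exact le_antisymm (le_iInf hmin) (iInf_le _ xbar)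

/-- Every limit point of the DC algorithm iterates is a global minimizer of `J`. -/
theorem dc_algorithm_limit_points_minimize {n q : ℕ}
    (F₁ : EuclideanSpace ℝ (Fin n) → EReal)
    (F₂ : EuclideanSpace ℝ (Fin q) → EReal)
    (Φ : EuclideanSpace ℝ (Fin q) → ℝ)
    (Ξ : EuclideanSpace ℝ (Fin n) →ₗ[ℝ] EuclideanSpace ℝ (Fin q))
    (hF₁proper : ERealProper F₁) (hF₁lsc : LowerSemicontinuous F₁)
    (hF₁conv : ERealConvexOn F₁)
    (hF₂proper : ERealProper F₂) (hF₂lsc : LowerSemicontinuous F₂)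
    (hF₂conv : ERealConvexOn F₂)
    (hΦdiff : Differentiable ℝ Φ) (hΦconv : ConvexOn ℝ Set.univ Φ)
    (hΦlip : ∃ K : NNReal, LipschitzWith K (fun z => gradient Φ z))
    (hexact : ∀ s, ∃ zs,
      F₂ zs + (Φ (s - zs) : EReal) = infConv F₂ (fun z => (Φ z : EReal)) s ∧
      ∃ r : ℝ, infConv F₂ (fun z => (Φ z : EReal)) s = (r : EReal))
    (hJproper : ERealProper
      (fun x => F₁ x - infConv F₂ (fun z => (Φ z : EReal)) (Ξ x)))
    (hJlsc : LowerSemicontinuous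
      (fun x => F₁ x - infConv F₂ (fun z => (Φ z : EReal)) (Ξ x)))
    (hJconv : ERealConvexOn
      (fun x => F₁ x - infConv F₂ (fun z => (Φ z : EReal)) (Ξ x)))
    (hargmin_ne : {x : EuclideanSpace ℝ (Fin n) | ∀ w,
        F₁ x - infConv F₂ (fun z => (Φ z : EReal)) (Ξ x)
          ≤ F₁ w - infConv F₂ (fun z => (Φ z : EReal)) (Ξ w)}.Nonempty)
    (hargmin_bdd : Bornology.IsBounded {x : EuclideanSpace ℝ (Fin n) | ∀ w,
        F₁ x - infConv F₂ (fun z => (Φ z : EReal)) (Ξ x)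
          ≤ F₁ w - infConv F₂ (fun z => (Φ z : EReal)) (Ξ w)})
    (xseq : ℕ → EuclideanSpace ℝ (Fin n))
    (zseq : ℕ → EuclideanSpace ℝ (Fin q))
    (useq : ℕ → EuclideanSpace ℝ (Fin n))
    (hz : ∀ k, ∀ w, F₂ (zseq k) + (Φ (Ξ (xseq k) - zseq k) : EReal)
        ≤ F₂ w + (Φ (Ξ (xseq k) - w) : EReal))
    (hu : ∀ k, useq k = LinearMap.adjoint Ξ (gradient Φ (Ξ (xseq k) - zseq k)))
    (hx : ∀ k, ∀ w, F₁ (xseq (k + 1)) - ((⟪useq k, xseq (k + 1)⟫ : ℝ) : EReal)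
        ≤ F₁ w - ((⟪useq k, w⟫ : ℝ) : EReal)) :
    ∀ xbar : EuclideanSpace ℝ (Fin n),
      (∃ φ : ℕ → ℕ, StrictMono φ ∧
        Filter.Tendsto (fun k => xseq (φ k)) Filter.atTop (nhds xbar)) →
      F₁ xbar - infConv F₂ (fun z => (Φ z : EReal)) (Ξ xbar)
        = ⨅ w, (F₁ w - infConv F₂ (fun z => (Φ z : EReal)) (Ξ w)) :=
  dc_algorithm_limit_points_minimize' F₁ F₂ Φ Ξ hF₁proper hF₂proper hF₂conv
    hΦdiff hΦconv hΦlip hexact hJlsc hJconv xseq zseq useq hz hu hx
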